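/- arXiv:1706.05614 — 9 statements merged into one kernel-verified Lean document; each statement's English description precedes it below -/
import Mathlib

section
/- Let H and K be subgroups of a finite group G with H ⊆ K. Then Pr(H, Aut(G)) ≤ [K : H] · Pr(K, Aut(G)), and equality holds if and only if H = K. -/
open scoped Classical

variable {G : Type*}

/-- The relative autocommutativity degree `Pr(H, Aut(G))`: the probability that a randomly
chosen automorphism of `G` fixes a randomly chosen element of the subgroup `H`. -/
noncomputable def autPr [Group G] (H : Subgroup G) : ℚ :=
  (Nat.card {p : H × MulAut G // p.2 (p.1 : G) = (p.1 : G)} : ℚ) /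
    ((Nat.card H : ℚ) * (Nat.card (MulAut G) : ℚ))

/-- `L(H, Aut(G))`, the subgroup of elements of `H` fixed by every automorphism of `G`. -/
def autFix [Group G] (H : Subgroup G) : Subgroup G where
  carrier := {x | x ∈ H ∧ ∀ α : MulAut G, α x = x}
  one_mem' := ⟨H.one_mem, fun α => map_one α⟩
  mul_mem' := fun ha hb => ⟨H.mul_mem ha.1 hb.1, fun α => by
    rw [map_mul, ha.2 α, hb.2 α]⟩
  inv_mem' := fun ha => ⟨H.inv_mem ha.1, fun α => by rw [map_inv, ha.2 α]⟩

instance autFix_normal [Group G] (H : Subgroup G) : ((autFix H).subgroupOf H).Normal := by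
  constructor
  intro n hn g
  rw [Subgroup.mem_subgroupOf] at hn ⊢
  obtain ⟨-, hfix⟩ := hn
  have hcen : ∀ c : G, c * (n : G) = (n : G) * c := by
    intro c
    have h := hfix (MulAut.conj c)
    simp only [MulAut.conj_apply] at h
    exact mul_inv_eq_iff_eq_mul.mp h
  have hconj : ∀ c : G, c * (n : G) * c⁻¹ = (n : G) := by
    intro c
    rw [hcen c, mul_inv_cancel_right]
  refine ⟨(g * n * g⁻¹).2, fun α => ?_⟩
  push_cast
  rw [map_mul, map_mul, map_inv, hfix α, hconj (α g), hconj (g : G)]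

/-- `X_H`: the set of elements of `H` whose centralizer in `Aut(G)` is trivial, i.e. the only
automorphism fixing them is the identity. -/
def autX [Group G] (H : Subgroup G) : Set H :=
  {x | ∀ α : MulAut G, α (x : G) = x → α = 1}

/-- `S(H, Aut(G))`: the set of autocommutators `[x, α] = x⁻¹ α(x)` with `x ∈ H`, `α ∈ Aut(G)`. -/
def autS [Group G] (H : Subgroup G) : Set G :=
  {g | ∃ x ∈ H, ∃ α : MulAut G, g = x⁻¹ * α x}

/-- Every autocommutator `x⁻¹ α(x)` with `x ∈ H` lies in `[H, Aut(G)] = ⟨S(H, Aut(G))⟩`. -/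
lemma autcomm_mem_closure [Group G] (H : Subgroup G) (x : H) (α : MulAut G) :
    (x : G)⁻¹ * α x ∈ Subgroup.closure (autS H) :=
  Subgroup.subset_closure ⟨x, x.2, α, rfl⟩

/-! Inside `G × Aut(G)`, the pairs `(x, α)` with `x ∈ H` and `α x = x` form a set that grows
strictly with `H`, since `(x, 1)` is such a pair for every `x`. As `|K| = [K : H] |H|`, both sides
of the inequality are counts of such pairs over the common denominator `|H| |Aut(G)|`, so the
inequality and its equality case reduce to comparing the two counts. -/

section FixedPairs

variable [Group G]

def fixedPairs (H : Subgroup G) : Set (G × MulAut G) :=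
  {p | p.1 ∈ H ∧ p.2 p.1 = p.1}

theorem fixedPairs_mono : Monotone (fixedPairs (G := G)) :=
  fun _ _ hHK _ hp => ⟨hHK hp.1, hp.2⟩

theorem fixedPairs_strictMono : StrictMono (fixedPairs (G := G)) := by
  intro H K hHK
  obtain ⟨x, hxK, hxH⟩ := SetLike.exists_of_lt hHK
  refine Set.ssubset_iff_subset_ne.mpr ⟨fixedPairs_mono hHK.le, fun hEq => hxH ?_⟩
  have hx : (x, (1 : MulAut G)) ∈ fixedPairs K := ⟨hxK, rfl⟩
  exact (hEq ▸ hx).1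

def fixedPairsEquiv (H : Subgroup G) :
    {p : H × MulAut G // p.2 (p.1 : G) = (p.1 : G)} ≃ fixedPairs H where
  toFun p := ⟨((p.1.1 : G), p.1.2), p.1.1.2, p.2⟩
  invFun q := ⟨(⟨q.1.1, q.2.1⟩, q.1.2), q.2.2⟩
  left_inv _ := rfl
  right_inv _ := rfl

theorem autPr_eq_ncard_div (H : Subgroup G) :
    autPr H = (fixedPairs H).ncard / ((Nat.card H : ℚ) * Nat.card (MulAut G)) := by
  rw [autPr, Nat.card_congr (fixedPairsEquiv H), Nat.card_coe_set_eq]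

theorem relIndex_mul_card {H K : Subgroup G} (hHK : H ≤ K) :
    H.relIndex K * Nat.card H = Nat.card K := by
  rw [← Subgroup.relIndex_bot_left, ← Subgroup.relIndex_bot_left, mul_comm,
    Subgroup.relIndex_mul_relIndex _ _ _ bot_le hHK]

variable [Finite G]

theorem relIndex_mul_autPr {H K : Subgroup G} (hHK : H ≤ K) :
    H.relIndex K * autPr K = (fixedPairs K).ncard / ((Nat.card H : ℚ) * Nat.card (MulAut G)) := by
  have hH : (Nat.card H : ℚ) ≠ 0 := Nat.cast_ne_zero.mpr Nat.card_pos.ne'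
  have hAut : (Nat.card (MulAut G) : ℚ) ≠ 0 := Nat.cast_ne_zero.mpr Nat.card_pos.ne'
  have hrel : (H.relIndex K : ℚ) ≠ 0 :=
    Nat.cast_ne_zero.mpr (left_ne_zero_of_mul ((relIndex_mul_card hHK).symm ▸ Nat.card_pos.ne'))
  rw [autPr_eq_ncard_div, ← relIndex_mul_card hHK, Nat.cast_mul]
  field_simp

theorem ncard_fixedPairs_lt {H K : Subgroup G} (hHK : H < K) :
    (fixedPairs H).ncard < (fixedPairs K).ncard :=
  Set.ncard_lt_ncard (fixedPairs_strictMono hHK) (Set.toFinite _)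

end FixedPairs

theorem stmt3_general [Group G] [Fintype G] (H K : Subgroup G) (hHK : H ≤ K) :
    autPr H ≤ (H.relIndex K : ℚ) * autPr K
    ∧ (autPr H = (H.relIndex K : ℚ) * autPr K ↔ H = K) := by
  have hD : (0 : ℚ) < Nat.card H * Nat.card (MulAut G) :=
    mul_pos (Nat.cast_pos.mpr Nat.card_pos) (Nat.cast_pos.mpr Nat.card_pos)
  rw [autPr_eq_ncard_div, relIndex_mul_autPr hHK]
  refine ⟨div_le_div_of_nonneg_right ?_ hD.le, ⟨fun hEq => ?_, fun hEq => hEq ▸ rfl⟩⟩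
  · exact_mod_cast Set.ncard_le_ncard (fixedPairs_mono hHK) (Set.toFinite _)
  · by_contra hne
    have := ncard_fixedPairs_lt (lt_of_le_of_ne hHK hne)
    rw [div_left_inj' hD.ne', Nat.cast_inj] at hEq
    omega

theorem stmt3 [Group G] [Fintype G] [DecidableEq G] (H K : Subgroup G) (hHK : H ≤ K) :
    autPr H ≤ (H.relIndex K : ℚ) * autPr K
    ∧ (autPr H = (H.relIndex K : ℚ) * autPr K ↔ H = K) :=
  stmt3_general H K hHK
end

section
/- Let H be a subgroup of a finite group G. Then Pr(H, Aut(G)) ≤ [G : H] · Pr(G, Aut(G)), with equality if and only if H = G. -/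
/-!
Since `[G : H] · |H| = |G|`, both sides have the denominator `|H| · |Aut(G)|`, so the claim
compares the numbers of pairs `(x, α)` with `α(x) = x` and `x` in `H`, respectively in `G`.
The pairs for `H` inject into those for `G`, and the injection misses `(g, 1)` for `g ∉ H`.
-/

open scoped Classical

variable {G : Type*}

abbrev FixedPairs [Group G] (H : Subgroup G) : Type _ :=
  {p : H × MulAut G // p.2 (p.1 : G) = (p.1 : G)}

namespace FixedPairs

variable [Group G] {H K : Subgroup G}

def inclusion (h : H ≤ K) (p : FixedPairs H) : FixedPairs K :=
  ⟨(Subgroup.inclusion h p.1.1, p.1.2), p.2⟩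

lemma inclusion_injective (h : H ≤ K) : Function.Injective (inclusion h) := fun _ _ hpq =>
  Subtype.ext <| Prod.ext (Subgroup.inclusion_injective h (congrArg (·.1.1) hpq))
    (congrArg (·.1.2) hpq)

lemma card_le_of_le [Finite G] (h : H ≤ K) : Nat.card (FixedPairs H) ≤ Nat.card (FixedPairs K) :=
  Nat.card_le_card_of_injective _ (inclusion_injective h)

lemma card_lt_of_lt [Finite G] (h : H < K) : Nat.card (FixedPairs H) < Nat.card (FixedPairs K) := by
  obtain ⟨g, hgK, hgH⟩ := SetLike.exists_of_lt h
  refine (card_le_of_le h.le).lt_of_ne fun hcard => hgH ?_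
  obtain ⟨p, hp⟩ := ((Nat.bijective_iff_injective_and_card _).mpr
    ⟨inclusion_injective h.le, hcard⟩).2 ⟨(⟨g, hgK⟩, 1), rfl⟩
  have hpg : (p.1.1 : G) = g := congrArg (fun q : FixedPairs K => (q.1.1 : G)) hp
  exact hpg ▸ p.1.1.2

end FixedPairs

lemma index_mul_autPr_top [Group G] [Finite G] (H : Subgroup G) :
    (H.index : ℚ) * autPr (⊤ : Subgroup G) =
      Nat.card (FixedPairs (⊤ : Subgroup G)) / ((Nat.card H : ℚ) * Nat.card (MulAut G)) := by
  have hH : (Nat.card H : ℚ) ≠ 0 := by exact_mod_cast Nat.card_pos.ne'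
  have hA : (Nat.card (MulAut G) : ℚ) ≠ 0 := by exact_mod_cast Nat.card_pos.ne'
  have hi : (H.index : ℚ) ≠ 0 := by exact_mod_cast H.index_ne_zero_of_finite
  rw [autPr, Subgroup.card_top, ← H.index_mul_card]
  push_cast
  field_simp

theorem stmt4_general [Group G] [Fintype G] (H : Subgroup G) :
    autPr H ≤ (H.index : ℚ) * autPr (⊤ : Subgroup G)
    ∧ (autPr H = (H.index : ℚ) * autPr (⊤ : Subgroup G) ↔ H = ⊤) := by
  have hden : (0 : ℚ) < Nat.card H * Nat.card (MulAut G) := by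
    have := (Nat.card_pos : 0 < Nat.card H)
    have := (Nat.card_pos : 0 < Nat.card (MulAut G))
    positivity
  rw [index_mul_autPr_top, autPr, div_le_div_iff_of_pos_right hden, div_left_inj' hden.ne',
    Nat.cast_le, Nat.cast_inj]
  refine ⟨FixedPairs.card_le_of_le le_top, fun hcard => ?_, fun hH => by subst hH; rfl⟩
  by_contra hH
  exact (FixedPairs.card_lt_of_lt (lt_top_iff_ne_top.mpr hH)).ne hcard

theorem stmt4 [Group G] [Fintype G] [DecidableEq G] (H : Subgroup G) :
    autPr H ≤ (H.index : ℚ) * autPr (⊤ : Subgroup G)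
    ∧ (autPr H = (H.index : ℚ) * autPr (⊤ : Subgroup G) ↔ H = ⊤) :=
  stmt4_general H
end

section
/- Let H be a subgroup of a finite group G with H ≠ L(H, Aut(G)), and let p be the smallest prime dividing |Aut(G)|. Then Pr(H, Aut(G)) ≤ ((p − 1)·|L(H, Aut(G))| + |H|)/(p·|H|) − |X_H|·(|Aut(G)| − p)/(p·|H|·|Aut(G)|), where X_H = {x ∈ H : C_{Aut(G)}(x) = {id}}. -/
open scoped Classical

variable {G : Type*}

/-!
Counting pairs by their first coordinate, `|H|·|Aut(G)|·Pr(H, Aut(G)) = ∑_{x ∈ H} |C_{Aut(G)}(x)|`.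
An element of `L(H, Aut(G))` contributes `|Aut(G)|`, an element of `X_H` contributes `1`, and any
other `x ∈ H` has a proper stabilizer, whose index divides `|Aut(G)|` and so is at least `p`;
such an `x` contributes at most `|Aut(G)|/p`.
-/

lemma Nat.card_subtype_prod_eq_sum {α β : Type*} [Fintype α] [Finite β] (r : α → β → Prop) :
    Nat.card {q : α × β // r q.1 q.2} = ∑ a, Nat.card {b // r a b} := by
  rw [Nat.card_congr (Equiv.subtypeProdEquivSigmaSubtype r), Nat.card_sigma]

lemma Subgroup.mul_card_le_card_of_ne_top {A : Type*} [Group A] [Finite A] {K : Subgroup A}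
    (hK : K ≠ ⊤) {p : ℕ} (hpmin : ∀ r : ℕ, r.Prime → r ∣ Nat.card A → p ≤ r) :
    p * Nat.card K ≤ Nat.card A := by
  have hidx : K.index ≠ 1 := mt Subgroup.index_eq_one.mp hK
  have hp_le : p ≤ K.index :=
    (hpmin _ (Nat.minFac_prime hidx) ((Nat.minFac_dvd _).trans K.index_dvd_card)).trans
      (Nat.minFac_le (Nat.pos_of_ne_zero K.index_ne_zero_of_finite))
  calc p * Nat.card K ≤ K.index * Nat.card K := Nat.mul_le_mul_right _ hp_le
    _ = Nat.card A := K.index_mul_card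

section

variable [Group G] (H : Subgroup G)

open MulAction Finset

lemma card_autPr_pairs_eq_sum [Fintype G] :
    Nat.card {q : H × MulAut G // q.2 (q.1 : G) = q.1} =
      ∑ x : H, Nat.card (stabilizer (MulAut G) (x : G)) :=
  Nat.card_subtype_prod_eq_sum fun (x : H) (α : MulAut G) => α (x : G) = x

lemma stabilizer_eq_top_of_mem_autFix {x : G} (hx : x ∈ autFix H) :
    stabilizer (MulAut G) x = ⊤ :=
  eq_top_iff.mpr fun α _ => hx.2 α

lemma stabilizer_eq_bot_of_mem_autX {x : H} (hx : x ∈ autX H) :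
    stabilizer (MulAut G) (x : G) = ⊥ :=
  eq_bot_iff.mpr fun α hα => hx α hα

lemma stabilizer_ne_top_of_not_mem_autFix {x : H} (hx : (x : G) ∉ autFix H) :
    stabilizer (MulAut G) (x : G) ≠ ⊤ := fun htop =>
  hx ⟨x.2, fun α => (htop ▸ Subgroup.mem_top α : α ∈ stabilizer (MulAut G) (x : G))⟩

/-- The weights are chosen so that their sum over `H` is `|H|·|Aut(G)|` times the bound of the
theorem. -/
lemma card_stabilizer_le [Finite G] {p : ℕ} (hp : 0 < p)
    (hpmin : ∀ r : ℕ, r.Prime → r ∣ Nat.card (MulAut G) → p ≤ r) (x : H) :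
    (Nat.card (stabilizer (MulAut G) (x : G)) : ℚ) ≤
      (Nat.card (MulAut G) : ℚ) / p
        + ((Nat.card (MulAut G) : ℚ) - Nat.card (MulAut G) / p)
          * (if (x : G) ∈ autFix H then 1 else 0)
        + (1 - (Nat.card (MulAut G) : ℚ) / p) * (if x ∈ autX H then 1 else 0) := by
  have hpQ : (1 : ℚ) ≤ p := by exact_mod_cast hp
  by_cases hL : (x : G) ∈ autFix H <;> by_cases hX : x ∈ autX H <;>
    simp only [hL, hX, if_true, if_false, mul_one, mul_zero, add_zero]
  · -- `x` is fixed by every automorphism and only by the identity, so `Aut(G)` is trivial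
    have hN : Nat.card (MulAut G) = 1 := by
      rw [← Subgroup.card_top, ← stabilizer_eq_top_of_mem_autFix H hL,
        stabilizer_eq_bot_of_mem_autX H hX, Subgroup.card_bot]
    rw [hN, stabilizer_eq_bot_of_mem_autX H hX, Subgroup.card_bot, Nat.cast_one]
    have : (1 : ℚ) / p ≤ 1 := div_le_one_of_le₀ hpQ (by positivity)
    linarith
  · rw [stabilizer_eq_top_of_mem_autFix H hL, Subgroup.card_top]
    linarith
  · rw [stabilizer_eq_bot_of_mem_autX H hX, Subgroup.card_bot, Nat.cast_one]
    linarith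
  · have h := Subgroup.mul_card_le_card_of_ne_top
      (stabilizer_ne_top_of_not_mem_autFix H hL) hpmin
    rw [le_div_iff₀ (by positivity), mul_comm]
    exact_mod_cast h

lemma sum_card_stabilizer_le [Fintype G] {p : ℕ} (hp : 0 < p)
    (hpmin : ∀ r : ℕ, r.Prime → r ∣ Nat.card (MulAut G) → p ≤ r) :
    ∑ x : H, (Nat.card (stabilizer (MulAut G) (x : G)) : ℚ) ≤
      Nat.card H * ((Nat.card (MulAut G) : ℚ) / p)
        + ((Nat.card (MulAut G) : ℚ) - Nat.card (MulAut G) / p) * Nat.card (autFix H)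
        + (1 - (Nat.card (MulAut G) : ℚ) / p) * Nat.card (autX H) := by
  have hL : #{x : H | (x : G) ∈ autFix H} = Nat.card (autFix H) := by
    rw [← Fintype.card_subtype, ← Nat.card_eq_fintype_card]
    exact Nat.card_congr <| (Equiv.subtypeEquivRight fun x => Subgroup.mem_subgroupOf.symm).trans
      (Subgroup.subgroupOfEquivOfLe fun _ (hg : _ ∈ autFix H) => hg.1).toEquiv
  have hX : #{x : H | x ∈ autX H} = Nat.card (autX H) := by
    rw [← Fintype.card_subtype, ← Nat.card_eq_fintype_card]
  refine (sum_le_sum fun x _ => card_stabilizer_le H hp hpmin x).trans_eq ?_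
  rw [sum_add_distrib, sum_add_distrib, sum_const, ← mul_sum, ← mul_sum, sum_boole, sum_boole,
    hL, hX, card_univ, ← Nat.card_eq_fintype_card, nsmul_eq_mul]

end

theorem stmt5_general [Group G] [Fintype G] (H : Subgroup G) (p : ℕ) (hp : p.Prime)
    (hpmin : ∀ r : ℕ, r.Prime → r ∣ Nat.card (MulAut G) → p ≤ r) :
    autPr H ≤
      (((p : ℚ) - 1) * (Nat.card (autFix H) : ℚ) + (Nat.card H : ℚ))
          / ((p : ℚ) * (Nat.card H : ℚ))
        - (Nat.card (autX H) : ℚ) * ((Nat.card (MulAut G) : ℚ) - (p : ℚ))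
          / ((p : ℚ) * (Nat.card H : ℚ) * (Nat.card (MulAut G) : ℚ)) := by
  have hN : (0 : ℚ) < Nat.card (MulAut G) := by exact_mod_cast Nat.card_pos
  have hH : (0 : ℚ) < Nat.card H := by exact_mod_cast Nat.card_pos
  have hp0 : (0 : ℚ) < p := by exact_mod_cast hp.pos
  rw [autPr, card_autPr_pairs_eq_sum, Nat.cast_sum, div_le_iff₀ (by positivity)]
  refine (sum_card_stabilizer_le H hp.pos hpmin).trans_eq ?_
  field_simp
  ring

theorem stmt5 [Group G] [Fintype G] [DecidableEq G] (H : Subgroup G)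
    (hne : H ≠ autFix H) (p : ℕ) (hp : p.Prime) (hpdvd : p ∣ Nat.card (MulAut G))
    (hpmin : ∀ r : ℕ, r.Prime → r ∣ Nat.card (MulAut G) → p ≤ r) :
    autPr H ≤
      (((p : ℚ) - 1) * (Nat.card (autFix H) : ℚ) + (Nat.card H : ℚ))
          / ((p : ℚ) * (Nat.card H : ℚ))
        - (Nat.card (autX H) : ℚ) * ((Nat.card (MulAut G) : ℚ) - (p : ℚ))
          / ((p : ℚ) * (Nat.card H : ℚ) * (Nat.card (MulAut G) : ℚ)) :=
  stmt5_general H p hp hpmin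
end

section
/- Let H be a subgroup of a finite group G with H ≠ L(H, Aut(G)). If p is the smallest prime dividing |Aut(G)| and q is the smallest prime dividing |H|, then Pr(H, Aut(G)) ≤ (p + q − 1)/(pq). In particular, if q ≥ p then Pr(H, Aut(G)) ≤ (2p − 1)/p² ≤ 3/4. -/
open scoped Classical

variable {G : Type*}

/-!
Split the fixed pairs `(x, α)` according to whether `x` lies in `L = L(H, Aut(G))`. For `x ∈ L`
every automorphism fixes `x`; for `x ∉ L` the stabilizer of `x` is a proper subgroup of
`Aut(G)`, so its index is a divisor `≠ 1` of `|Aut(G)|` and hence at least `p`. This gives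
`Pr(H, Aut(G)) ≤ 1/p + (1 - 1/p) |L|/|H|`, and `L` is a proper subgroup of `H`, so
`|L|/|H| ≤ 1/q` by the same index argument.
-/

namespace Subgroup

variable {A : Type*} [Group A] [Finite A]

lemma le_index_of_ne_top {K : Subgroup A} (hK : K ≠ ⊤) {p : ℕ}
    (hp : ∀ r : ℕ, r.Prime → r ∣ Nat.card A → p ≤ r) : p ≤ K.index :=
  calc p ≤ K.index.minFac :=
        hp _ (Nat.minFac_prime (mt index_eq_one.mp hK))
          ((Nat.minFac_dvd _).trans K.index_dvd_card)
    _ ≤ K.index := Nat.minFac_le (Nat.pos_of_ne_zero K.index_ne_zero_of_finite)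

lemma mul_card_le_card_of_ne_top_s6 {K : Subgroup A} (hK : K ≠ ⊤) {p : ℕ}
    (hp : ∀ r : ℕ, r.Prime → r ∣ Nat.card A → p ≤ r) : p * Nat.card K ≤ Nat.card A := by
  rw [← K.card_mul_index, mul_comm p]
  exact Nat.mul_le_mul_left _ (le_index_of_ne_top hK hp)

end Subgroup

namespace MulAction

variable {A X ι : Type*} [Group A] [Finite A] [MulAction A X] [Fintype ι]

lemma card_fixedPairs_eq_sum_card_stabilizer (f : ι → X) :
    Nat.card {c : ι × A // c.2 • f c.1 = f c.1} = ∑ i, Nat.card (stabilizer A (f i)) := by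
  rw [Nat.card_congr (Equiv.subtypeProdEquivSigmaSubtype fun i (a : A) => a • f i = f i),
    Nat.card_sigma]
  rfl

lemma mul_card_stabilizer_le {p : ℕ} (hp : ∀ r : ℕ, r.Prime → r ∣ Nat.card A → p ≤ r)
    {x : X} (hx : ¬ ∀ a : A, a • x = x) : p * Nat.card (stabilizer A x) ≤ Nat.card A :=
  Subgroup.mul_card_le_card_of_ne_top_s6
    (fun h => hx fun a => mem_stabilizer_iff.mp (eq_top_iff.mp h (Subgroup.mem_top a))) hp

lemma mul_sum_card_stabilizer_le (f : ι → X) {p : ℕ} (hp0 : 0 < p)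
    (hp : ∀ r : ℕ, r.Prime → r ∣ Nat.card A → p ≤ r) :
    p * ∑ i, Nat.card (stabilizer A (f i)) ≤
      (Nat.card ι + (p - 1) * Nat.card {i // ∀ a : A, a • f i = f i}) * Nat.card A := by
  have hterm : ∀ i, p * Nat.card (stabilizer A (f i)) ≤
      Nat.card A + (p - 1) * Nat.card A * if ∀ a : A, a • f i = f i then 1 else 0 := by
    intro i
    split_ifs with hfix
    · have htop : stabilizer A (f i) = ⊤ := eq_top_iff.mpr fun a _ => hfix a
      rw [htop, Subgroup.card_top]
      nlinarith [Nat.sub_add_cancel hp0]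
    · simpa using mul_card_stabilizer_le hp hfix
  calc p * ∑ i, Nat.card (stabilizer A (f i))
      ≤ ∑ i, (Nat.card A +
          (p - 1) * Nat.card A * if ∀ a : A, a • f i = f i then 1 else 0) := by
        rw [Finset.mul_sum]
        exact Finset.sum_le_sum fun i _ => hterm i
    _ = _ := by
        simp only [Finset.sum_add_distrib, ← Finset.mul_sum, Finset.sum_boole, Finset.sum_const,
          Finset.card_univ, smul_eq_mul, Nat.cast_id, Nat.card_eq_fintype_card,
          Fintype.card_subtype]
        ring

end MulAction

lemma card_subgroupOf_autFix [Group G] (H : Subgroup G) :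
    Nat.card ((autFix H).subgroupOf H) =
      Nat.card {x : H // ∀ α : MulAut G, α • (x : G) = x} :=
  Nat.card_congr <| Equiv.subtypeEquivRight fun x => by
    simp [Subgroup.mem_subgroupOf, autFix, MulAut.smul_def]

lemma autPr_le_of_ne_autFix [Group G] [Fintype G] (H : Subgroup G) (hne : H ≠ autFix H)
    {p q : ℕ} (hp0 : 0 < p) (hpmin : ∀ r : ℕ, r.Prime → r ∣ Nat.card (MulAut G) → p ≤ r)
    (hq0 : 0 < q) (hqmin : ∀ r : ℕ, r.Prime → r ∣ Nat.card H → q ≤ r) :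
    autPr H ≤ ((p : ℚ) + q - 1) / (p * q) := by
  have hpairs : p * Nat.card {c : H × MulAut G // c.2 (c.1 : G) = c.1} ≤
      (Nat.card H + (p - 1) * Nat.card ((autFix H).subgroupOf H)) * Nat.card (MulAut G) := by
    rw [card_subgroupOf_autFix, show Nat.card {c : H × MulAut G // c.2 (c.1 : G) = c.1} = _ from
      MulAction.card_fixedPairs_eq_sum_card_stabilizer (A := MulAut G) (Subtype.val : H → G)]
    exact MulAction.mul_sum_card_stabilizer_le _ hp0 hpmin
  have hfix : q * Nat.card ((autFix H).subgroupOf H) ≤ Nat.card H := by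
    refine Subgroup.mul_card_le_card_of_ne_top_s6 (fun htop => hne ?_) hqmin
    exact le_antisymm (Subgroup.subgroupOf_eq_top.mp htop) fun x hx => hx.1
  have hpairsQ := (Nat.cast_le (α := ℚ)).mpr hpairs
  have hfixQ := (Nat.cast_le (α := ℚ)).mpr hfix
  push_cast [Nat.cast_sub hp0] at hpairsQ hfixQ
  have hh : (0 : ℚ) < Nat.card H := by exact_mod_cast Nat.card_pos
  have ha : (0 : ℚ) < Nat.card (MulAut G) := by exact_mod_cast Nat.card_pos
  have hp1 : (1 : ℚ) ≤ p := by exact_mod_cast hp0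
  have hq : (0 : ℚ) < q := by exact_mod_cast hq0
  rw [autPr, div_le_div_iff₀ (by positivity) (by positivity)]
  nlinarith [mul_le_mul_of_nonneg_left hpairsQ hq.le,
    mul_le_mul_of_nonneg_right hfixQ (mul_nonneg (sub_nonneg.mpr hp1) ha.le)]

lemma add_sub_one_div_mul_le {p q : ℚ} (hp : 1 ≤ p) (hpq : p ≤ q) :
    (p + q - 1) / (p * q) ≤ (2 * p - 1) / p ^ 2 := by
  rw [div_le_div_iff₀ (mul_pos (by linarith) (by linarith)) (by positivity)]
  nlinarith [mul_nonneg (sub_nonneg.mpr hpq) (sub_nonneg.mpr hp)]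

lemma two_mul_sub_one_div_sq_le {p : ℚ} (hp : 2 ≤ p) : (2 * p - 1) / p ^ 2 ≤ 3 / 4 := by
  rw [div_le_div_iff₀ (by positivity) (by norm_num)]
  nlinarith [sq_nonneg (p - 2)]

theorem stmt6_general [Group G] [Fintype G] (H : Subgroup G)
    (hne : H ≠ autFix H) (p q : ℕ)
    (hp : p.Prime)
    (hpmin : ∀ r : ℕ, r.Prime → r ∣ Nat.card (MulAut G) → p ≤ r)
    (hq : q.Prime)
    (hqmin : ∀ r : ℕ, r.Prime → r ∣ Nat.card H → q ≤ r) :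
    autPr H ≤ ((p : ℚ) + (q : ℚ) - 1) / ((p : ℚ) * (q : ℚ))
    ∧ (p ≤ q →
        autPr H ≤ (2 * (p : ℚ) - 1) / (p : ℚ) ^ 2
        ∧ (2 * (p : ℚ) - 1) / (p : ℚ) ^ 2 ≤ 3 / 4) := by
  have hbound := autPr_le_of_ne_autFix H hne hp.pos hpmin hq.pos hqmin
  refine ⟨hbound, fun hpq => ⟨hbound.trans (add_sub_one_div_mul_le ?_ ?_), ?_⟩⟩
  · exact_mod_cast hp.one_lt.le
  · exact_mod_cast hpq
  · exact two_mul_sub_one_div_sq_le (by exact_mod_cast hp.two_le)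

theorem stmt6 [Group G] [Fintype G] [DecidableEq G] (H : Subgroup G)
    (hne : H ≠ autFix H) (p q : ℕ)
    (hp : p.Prime) (hpdvd : p ∣ Nat.card (MulAut G))
    (hpmin : ∀ r : ℕ, r.Prime → r ∣ Nat.card (MulAut G) → p ≤ r)
    (hq : q.Prime) (hqdvd : q ∣ Nat.card H)
    (hqmin : ∀ r : ℕ, r.Prime → r ∣ Nat.card H → q ≤ r) :
    autPr H ≤ ((p : ℚ) + (q : ℚ) - 1) / ((p : ℚ) * (q : ℚ))
    ∧ (p ≤ q →
        autPr H ≤ (2 * (p : ℚ) - 1) / (p : ℚ) ^ 2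
        ∧ (2 * (p : ℚ) - 1) / (p : ℚ) ^ 2 ≤ 3 / 4) :=
  stmt6_general H hne p q hp hpmin hq hqmin
end

section
/- Let H be a non-abelian subgroup of even order of a finite group G such that |Aut(G)| is even. If Pr(H, Aut(G)) = 5/8, then the quotient group H / L(H, Aut(G)) is isomorphic to ℤ_2 × ℤ_2. -/
open scoped Classical

variable {G : Type*}

/-!
Elements of `L = L(H, Aut G)` are fixed by inner automorphisms, so `L` is central in `H`; as `H`
is non-abelian, `H ⧸ L` is not cyclic. Each `x ∈ H \ L` has a proper stabilizer in `Aut G`, of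
index at least 2, so counting fixed pairs gives `Pr(H, Aut G) ≤ (1 + 1 / [H : L]) / 2`. Hence
`Pr(H, Aut G) = 5/8` forces `[H : L] ≤ 4`, and a non-cyclic group of order at most 4 is the
Klein four-group.
-/

section Counting

variable {A X ι : Type*} [Group A] [Finite A] [MulAction A X]

lemma card_fixedPairs_eq_sum_card_stabilizer [Fintype ι] (f : ι → X) :
    Nat.card {p : ι × A // p.2 • f p.1 = f p.1} =
      ∑ i, Nat.card (MulAction.stabilizer A (f i)) := by
  rw [Nat.card_congr (Equiv.subtypeProdEquivSigmaSubtype fun i (a : A) => a • f i = f i),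
    Nat.card_sigma]
  rfl

lemma Subgroup.two_mul_card_le_of_ne_top {K : Subgroup A} (hK : K ≠ ⊤) :
    2 * Nat.card K ≤ Nat.card A := by
  rw [← K.card_mul_index, mul_comm]
  exact Nat.mul_le_mul_left _ (K.one_lt_index_of_ne_top hK)

lemma two_mul_card_stabilizer_le (x : X) :
    2 * Nat.card (MulAction.stabilizer A x) ≤
      Nat.card A + if x ∈ MulAction.fixedPoints A X then Nat.card A else 0 := by
  by_cases hx : x ∈ MulAction.fixedPoints A X
  · rw [if_pos hx]
    have := Subgroup.card_le_card_group (MulAction.stabilizer A x)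
    omega
  · rw [if_neg hx, add_zero]
    refine Subgroup.two_mul_card_le_of_ne_top fun htop => hx fun a => ?_
    exact MulAction.mem_stabilizer_iff.mp (htop ▸ Subgroup.mem_top a)

lemma two_mul_card_fixedPairs_le [Finite ι] (f : ι → X) :
    2 * Nat.card {p : ι × A // p.2 • f p.1 = f p.1} ≤
      (Nat.card ι + Nat.card {i // f i ∈ MulAction.fixedPoints A X}) * Nat.card A := by
  have := Fintype.ofFinite ι
  calc 2 * Nat.card {p : ι × A // p.2 • f p.1 = f p.1}
      = ∑ i, 2 * Nat.card (MulAction.stabilizer A (f i)) := by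
        rw [card_fixedPairs_eq_sum_card_stabilizer, Finset.mul_sum]
    _ ≤ ∑ i, (Nat.card A + if f i ∈ MulAction.fixedPoints A X then Nat.card A else 0) :=
        Finset.sum_le_sum fun i _ => two_mul_card_stabilizer_le (f i)
    _ = (Nat.card ι + Nat.card {i // f i ∈ MulAction.fixedPoints A X}) * Nat.card A := by
        simp [Finset.sum_add_distrib, Finset.sum_ite, Fintype.card_subtype, add_mul]

end Counting

lemma not_isCyclic_quotient_of_le_center {K : Type*} [Group K] (hK : ¬IsMulCommutative K)
    {N : Subgroup K} [N.Normal] (hN : N ≤ Subgroup.center K) : ¬IsCyclic (K ⧸ N) := fun _ =>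
  hK <| (QuotientGroup.mk' N).isMulCommutative_of_isCyclic_of_ker_le_center
    (by rwa [QuotientGroup.ker_mk'])

section SmallGroups

variable {Q : Type*} [Group Q]

lemma card_eq_four_of_not_isCyclic [Finite Q] (hQ : ¬IsCyclic Q) (h4 : Nat.card Q ≤ 4) :
    Nat.card Q = 4 := by
  have hpos : 0 < Nat.card Q := Nat.card_pos
  interval_cases hc : Nat.card Q
  · have : Subsingleton Q := (Nat.card_eq_one_iff_unique.mp hc).1
    exact (hQ inferInstance).elim
  · exact absurd (isCyclic_of_prime_card (p := 2) hc) hQ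
  · exact absurd (isCyclic_of_prime_card (p := 3) hc) hQ
  · rfl

lemma isKleinFour_of_not_isCyclic (hQ : ¬IsCyclic Q) (h4 : Nat.card Q = 4) :
    IsKleinFour Q := by
  have : Finite Q := Nat.finite_of_card_ne_zero (by omega)
  have sq_eq_one (g : Q) : g ^ 2 = 1 := by
    have hdvd : orderOf g ∣ 2 ^ 2 := by simpa [h4] using orderOf_dvd_natCard g
    obtain ⟨k, hk, hg⟩ := (Nat.dvd_prime_pow Nat.prime_two).mp hdvd
    rw [← orderOf_dvd_iff_pow_eq_one, hg]
    interval_cases k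
    · exact one_dvd 2
    · exact dvd_rfl
    · exact absurd (isCyclic_of_orderOf_eq_card g (by rw [hg, h4]; rfl)) hQ
  have hexp : Monoid.exponent Q ∣ 2 := Monoid.exponent_dvd_of_forall_pow_eq_one sq_eq_one
  have hexp_ne_one : Monoid.exponent Q ≠ 1 := fun h1 => by
    have := Finite.card_le_one_iff_subsingleton.mpr (Monoid.exp_eq_one_iff.mp h1)
    omega
  exact ⟨h4, ((Nat.dvd_prime Nat.prime_two).mp hexp).resolve_left hexp_ne_one⟩

end SmallGroups

section AutFix

variable [Group G] (H : Subgroup G)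

lemma autFix_subgroupOf_le_center : (autFix H).subgroupOf H ≤ Subgroup.center H := by
  intro x hx
  rw [Subgroup.mem_center_iff]
  intro g
  have h := hx.2 (MulAut.conj (g : G))
  rw [MulAut.conj_apply, mul_inv_eq_iff_eq_mul] at h
  exact Subtype.ext h

lemma card_autFix_subgroupOf :
    Nat.card ((autFix H).subgroupOf H) =
      Nat.card {x : H // (x : G) ∈ MulAction.fixedPoints (MulAut G) G} :=
  Nat.card_congr <| Equiv.subtypeEquivRight fun x => ⟨fun hx => hx.2, fun hx => ⟨x.2, hx⟩⟩

lemma autPr_le_one_add_inv_index_div_two [Finite H] [Finite (MulAut G)] :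
    autPr H ≤ (1 + (((autFix H).subgroupOf H).index : ℚ)⁻¹) / 2 := by
  set L := (autFix H).subgroupOf H
  have hpairs : (2 * Nat.card {p : H × MulAut G // p.2 (p.1 : G) = (p.1 : G)} : ℚ) ≤
      (Nat.card L * L.index + Nat.card L) * Nat.card (MulAut G) := by
    have := two_mul_card_fixedPairs_le (A := MulAut G) (fun x : H => (x : G))
    rw [← card_autFix_subgroupOf, ← L.card_mul_index] at this
    exact_mod_cast this
  have hL : (0 : ℚ) < Nat.card L := by exact_mod_cast Nat.card_pos
  have hn : (0 : ℚ) < L.index := by exact_mod_cast Nat.pos_of_ne_zero L.index_ne_zero_of_finite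
  have hA : (0 : ℚ) < Nat.card (MulAut G) := by exact_mod_cast Nat.card_pos
  rw [autPr, ← L.card_mul_index, Nat.cast_mul, div_le_iff₀ (by positivity)]
  field_simp
  linarith

lemma index_autFix_subgroupOf_le_four [Finite H] [Finite (MulAut G)] (h : 5 / 8 ≤ autPr H) :
    ((autFix H).subgroupOf H).index ≤ 4 := by
  have hn : (0 : ℚ) < ((autFix H).subgroupOf H).index := by
    exact_mod_cast Nat.pos_of_ne_zero Subgroup.index_ne_zero_of_finite
  have hinv : (4 : ℚ)⁻¹ ≤ (((autFix H).subgroupOf H).index : ℚ)⁻¹ := by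
    linarith [h.trans (autPr_le_one_add_inv_index_div_two H)]
  exact_mod_cast (inv_le_inv₀ (by norm_num) hn).mp hinv

end AutFix

theorem stmt12_general [Group G] [Fintype G] (H : Subgroup G)
    (hna : ¬ IsMulCommutative H) (h : autPr H = 5 / 8) :
    Nonempty ((H ⧸ (autFix H).subgroupOf H)
      ≃* Multiplicative (ZMod 2) × Multiplicative (ZMod 2)) := by
  have hnc : ¬IsCyclic (H ⧸ (autFix H).subgroupOf H) :=
    not_isCyclic_quotient_of_le_center hna (autFix_subgroupOf_le_center H)
  have hindex := index_autFix_subgroupOf_le_four H h.ge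
  have : IsKleinFour (H ⧸ (autFix H).subgroupOf H) :=
    isKleinFour_of_not_isCyclic hnc (card_eq_four_of_not_isCyclic hnc hindex)
  obtain ⟨e⟩ := IsKleinFour.nonempty_mulEquiv (G₁ := H ⧸ (autFix H).subgroupOf H)
    (G₂ := Multiplicative (ZMod 2 × ZMod 2))
  exact ⟨e.trans (MulEquiv.prodMultiplicative _ _)⟩

theorem stmt12 [Group G] [Fintype G] [DecidableEq G] (H : Subgroup G)
    (hna : ¬ IsMulCommutative H) (hH : Even (Nat.card H))
    (hA : Even (Nat.card (MulAut G))) (h : autPr H = 5 / 8) :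
    Nonempty ((H ⧸ (autFix H).subgroupOf H)
      ≃* Multiplicative (ZMod 2) × Multiplicative (ZMod 2)) :=
  stmt12_general H hna h
end

section
/- Let H be a subgroup of a finite group G, let p be the smallest prime dividing |Aut(G)| and q the smallest prime dividing |H|, and suppose that [Aut(G) : C_{Aut(G)}(x)] = p for every x ∈ H \ L(H, Aut(G)). If H / L(H, Aut(G)) is isomorphic to the cyclic group ℤ_q, then Pr(H, Aut(G)) = (p + q − 1)/(pq). -/
/-!
`Pr(H, Aut G)` is the average over `x ∈ H` of the proportion `1 / [Aut G : C_{Aut G}(x)]` of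
automorphisms fixing `x`. This proportion is `1` on `L(H, Aut G)`, which is a `1/q`-th of `H`,
and `1/p` on the rest of `H`, so `Pr(H, Aut G) = 1/q + (1 - 1/q)/p = (p + q - 1)/(pq)`.
-/

open scoped Classical

variable {G : Type*}

lemma Subgroup.inv_index_eq_card_div_card {K : Type*} [Group K] [Finite K] (S : Subgroup K) :
    (S.index : ℚ)⁻¹ = Nat.card S / Nat.card K := by
  have hS : (S.index : ℚ) ≠ 0 := Nat.cast_ne_zero.mpr S.index_ne_zero_of_finite
  rw [eq_div_iff (Nat.cast_ne_zero.mpr Nat.card_pos.ne'), ← S.index_mul_card, Nat.cast_mul,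
    inv_mul_cancel_left₀ hS]

section AutCommutativity

variable [Group G]

lemma index_stabilizer_of_mem_autFix {H : Subgroup G} {x : G} (hx : x ∈ autFix H) :
    (MulAction.stabilizer (MulAut G) x).index = 1 :=
  Subgroup.index_eq_one.mpr <| eq_top_iff.mpr fun α _ => hx.2 α

variable [Fintype G]

lemma card_fixedPairs_eq_sum_card_stabilizer_s13 (H : Subgroup G) :
    Nat.card {p : H × MulAut G // p.2 (p.1 : G) = (p.1 : G)} =
      ∑ x : H, Nat.card (MulAction.stabilizer (MulAut G) (x : G)) := by
  rw [Nat.card_congr (Equiv.subtypeProdEquivSigmaSubtype fun (x : H) (α : MulAut G) => α x = x),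
    Nat.card_sigma]
  rfl

lemma autPr_eq_sum_inv_index_stabilizer (H : Subgroup G) :
    autPr H =
      (∑ x : H, ((MulAction.stabilizer (MulAut G) (x : G)).index : ℚ)⁻¹) / Nat.card H := by
  simp only [Subgroup.inv_index_eq_card_div_card, ← Finset.sum_div]
  rw [autPr, card_fixedPairs_eq_sum_card_stabilizer_s13, div_div, mul_comm]
  push_cast
  rfl

lemma card_filter_mem_autFix (H : Subgroup G) :
    (Finset.univ.filter fun x : H => (x : G) ∈ autFix H).card =
      Nat.card ((autFix H).subgroupOf H) := by
  rw [Nat.card_congr (Equiv.subtypeEquivRight fun x : H => Subgroup.mem_subgroupOf),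
    Nat.card_eq_fintype_card, Fintype.card_subtype]

theorem autPr_eq_of_index_stabilizer_eq (H : Subgroup G) {p q : ℕ} (hp : p ≠ 0)
    (hq : ((autFix H).subgroupOf H).index = q)
    (hstab : ∀ x : G, x ∈ H → x ∉ autFix H → (MulAction.stabilizer (MulAut G) x).index = p) :
    autPr H = ((p : ℚ) + q - 1) / (p * q) := by
  have hsum : ∑ x : H, ((MulAction.stabilizer (MulAut G) (x : G)).index : ℚ)⁻¹ =
      ∑ x : H, ((p : ℚ)⁻¹ + (1 - (p : ℚ)⁻¹) * if (x : G) ∈ autFix H then 1 else 0) := by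
    refine Finset.sum_congr rfl fun x _ => ?_
    by_cases hx : (x : G) ∈ autFix H
    · simp [hx, index_stabilizer_of_mem_autFix hx]
    · simp [hx, hstab x x.2 hx]
  have hcard : Nat.card H = q * Nat.card ((autFix H).subgroupOf H) := by
    rw [← hq, ((autFix H).subgroupOf H).index_mul_card]
  have hp0 : (p : ℚ) ≠ 0 := Nat.cast_ne_zero.mpr hp
  have hq0 : (q : ℚ) ≠ 0 := Nat.cast_ne_zero.mpr (hq ▸ Subgroup.index_ne_zero_of_finite)
  have hk0 : (Nat.card ((autFix H).subgroupOf H) : ℚ) ≠ 0 := Nat.cast_ne_zero.mpr Nat.card_pos.ne'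
  rw [autPr_eq_sum_inv_index_stabilizer, hsum, Finset.sum_add_distrib, ← Finset.mul_sum,
    Finset.sum_boole, card_filter_mem_autFix, Finset.sum_const, Finset.card_univ,
    ← Nat.card_eq_fintype_card, hcard, nsmul_eq_mul]
  push_cast
  field_simp
  ring

end AutCommutativity

theorem stmt13_general [Group G] [Fintype G] (H : Subgroup G) (p q : ℕ)
    (hp : p.Prime)
    (hstab : ∀ x : G, x ∈ H → x ∉ autFix H →
      (MulAction.stabilizer (MulAut G) x).index = p)
    (hquot : Nonempty ((H ⧸ (autFix H).subgroupOf H) ≃* Multiplicative (ZMod q))) :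
    autPr H = ((p : ℚ) + (q : ℚ) - 1) / ((p : ℚ) * (q : ℚ)) := by
  have hq : ((autFix H).subgroupOf H).index = q := by
    rw [Subgroup.index_eq_card, Nat.card_congr hquot.some.toEquiv,
      Nat.card_congr Multiplicative.toAdd, Nat.card_zmod]
  exact autPr_eq_of_index_stabilizer_eq H hp.ne_zero hq hstab

theorem stmt13 [Group G] [Fintype G] [DecidableEq G] (H : Subgroup G) (p q : ℕ)
    (hp : p.Prime) (hpdvd : p ∣ Nat.card (MulAut G))
    (hpmin : ∀ r : ℕ, r.Prime → r ∣ Nat.card (MulAut G) → p ≤ r)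
    (hq : q.Prime) (hqdvd : q ∣ Nat.card H)
    (hqmin : ∀ r : ℕ, r.Prime → r ∣ Nat.card H → q ≤ r)
    (hstab : ∀ x : G, x ∈ H → x ∉ autFix H →
      (MulAction.stabilizer (MulAut G) x).index = p)
    (hquot : Nonempty ((H ⧸ (autFix H).subgroupOf H) ≃* Multiplicative (ZMod q))) :
    autPr H = ((p : ℚ) + (q : ℚ) - 1) / ((p : ℚ) * (q : ℚ)) :=
  stmt13_general H p q hp hstab hquot
end

section
/- Let H be a subgroup of a finite group G. Then Pr(H, Aut(G)) ≤ Pr(H, G), where Pr(H, G) = |{(x, y) ∈ H × G : xy = yx}| / (|H|·|G|). -/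
/-!
Both sides are averages over `x ∈ H`: `Pr(H, Aut(G))` of `|Stab_{Aut(G)}(x)| / |Aut(G)|`, and
`Pr(H, G)` of `|C_G(x)| / |G|`. By orbit–stabilizer these are the reciprocals of the sizes of the
`Aut(G)`-orbit and of the conjugacy class of `x`, and the conjugacy class lies inside the orbit
because inner automorphisms are automorphisms.
-/

open scoped Classical

variable {G : Type*}

open MulAction

lemma Nat.card_subtype_prod_eq_sum_s15 {X Y : Type*} [Fintype X] [Finite Y] (P : X → Y → Prop) :
    Nat.card {p : X × Y // P p.1 p.2} = ∑ x, Nat.card {y // P x y} := by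
  rw [Nat.card_congr (Equiv.subtypeProdEquivSigmaSubtype P), Nat.card_sigma]

lemma MulAction.card_stabilizer_mul_card_le_of_orbit_subset {M N α : Type*} [Group M] [Group N]
    [MulAction M α] [MulAction N α] [Finite M] {x : α} (h : orbit N x ⊆ orbit M x) :
    Nat.card (stabilizer M x) * Nat.card N ≤ Nat.card (stabilizer N x) * Nat.card M := by
  have horbit : (orbit N x).ncard ≤ (orbit M x).ncard :=
    Set.ncard_le_ncard h (Set.finite_range _)
  rw [← (stabilizer N x).card_mul_index, ← (stabilizer M x).card_mul_index,
    index_stabilizer, index_stabilizer, mul_left_comm]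
  exact Nat.mul_le_mul_left _ (Nat.mul_le_mul_left _ horbit)

lemma orbit_conjAct_subset_orbit_mulAut [Group G] (x : G) :
    orbit (ConjAct G) x ⊆ orbit (MulAut G) x := by
  rintro _ ⟨c, rfl⟩
  exact ⟨MulAut.conj (ConjAct.ofConjAct c), rfl⟩

lemma card_stabilizer_conjAct_eq [Group G] (x : G) :
    Nat.card (stabilizer (ConjAct G) x) = Nat.card {y : G // x * y = y * x} := by
  rw [ConjAct.stabilizer_eq_centralizer]
  refine Nat.card_congr (ConjAct.toConjAct.toEquiv.subtypeEquiv fun y => ?_).symm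
  simp only [Subgroup.mem_centralizer_singleton_iff]
  exact eq_comm

lemma card_fixing_mulAut_mul_card_le [Group G] [Finite G] (x : G) :
    Nat.card {α : MulAut G // α x = x} * Nat.card G ≤
      Nat.card {y : G // x * y = y * x} * Nat.card (MulAut G) := by
  rw [← card_stabilizer_conjAct_eq]
  -- naming `N` keeps the regular action of `G` on itself from being inferred
  exact card_stabilizer_mul_card_le_of_orbit_subset (N := ConjAct G)
    (orbit_conjAct_subset_orbit_mulAut x)

theorem stmt15_general [Group G] [Fintype G] (H : Subgroup G) :
    autPr H ≤
      (Nat.card {p : H × G // (p.1 : G) * p.2 = p.2 * (p.1 : G)} : ℚ) /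
        ((Nat.card H : ℚ) * (Nat.card G : ℚ)) := by
  have hcount : Nat.card {p : H × MulAut G // p.2 (p.1 : G) = (p.1 : G)} * Nat.card G ≤
      Nat.card {p : H × G // (p.1 : G) * p.2 = p.2 * (p.1 : G)} * Nat.card (MulAut G) := by
    rw [Nat.card_subtype_prod_eq_sum_s15 (fun (x : H) (α : MulAut G) => α x = x),
      Nat.card_subtype_prod_eq_sum_s15 (fun (x : H) (y : G) => (x : G) * y = y * x),
      Finset.sum_mul, Finset.sum_mul]
    exact Finset.sum_le_sum fun x _ => card_fixing_mulAut_mul_card_le (x : G)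
  have hH : (0 : ℚ) < Nat.card H := by exact_mod_cast Nat.card_pos
  have hG : (0 : ℚ) < Nat.card G := by exact_mod_cast Nat.card_pos
  have hA : (0 : ℚ) < Nat.card (MulAut G) := by exact_mod_cast Nat.card_pos
  rw [autPr, div_le_div_iff₀ (by positivity) (by positivity),
    mul_left_comm _ (Nat.card H : ℚ), mul_left_comm _ (Nat.card H : ℚ)]
  exact mul_le_mul_of_nonneg_left (by exact_mod_cast hcount) hH.le

theorem stmt15 [Group G] [Fintype G] [DecidableEq G] (H : Subgroup G) :
    autPr H ≤
      (Nat.card {p : H × G // (p.1 : G) * p.2 = p.2 * (p.1 : G)} : ℚ) /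
        ((Nat.card H : ℚ) * (Nat.card G : ℚ)) :=
  stmt15_general H
end

section
/- Let H be a subgroup of a finite group G and p the smallest prime dividing |Aut(G)|. Then Pr(H, Aut(G)) ≥ |L(H, Aut(G))|/|H| + (p·(|H| − |X_H| − |L(H, Aut(G))|) + |X_H|)/(|H|·|Aut(G)|), where X_H = {x ∈ H : C_{Aut(G)}(x) = {id}}. -/
open scoped Classical

variable {G : Type*}

/-! Counting the pairs `(x, α)` with `α x = x` fibrewise over `x ∈ H` gives
`|H| |Aut(G)| Pr(H, Aut(G)) = ∑_{x ∈ H} |C_{Aut(G)}(x)|`. The summand is `|Aut(G)|` for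
`x ∈ L(H, Aut(G))`, `1` for `x ∈ X_H`, and otherwise the order of a nontrivial subgroup of
`Aut(G)`, hence at least its smallest prime divisor `p`. -/

open MulAction

theorem Subgroup.le_card_of_ne_bot {A : Type*} [Group A] [Finite A] {p : ℕ}
    (hpmin : ∀ r : ℕ, r.Prime → r ∣ Nat.card A → p ≤ r) {K : Subgroup A} (hK : K ≠ ⊥) :
    p ≤ Nat.card K := by
  have hK1 : Nat.card K ≠ 1 := (K.one_lt_card_iff_ne_bot.mpr hK).ne'
  calc p ≤ (Nat.card K).minFac :=
        hpmin _ (Nat.minFac_prime hK1) ((Nat.minFac_dvd _).trans K.card_subgroup_dvd_card)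
    _ ≤ Nat.card K := Nat.minFac_le Nat.card_pos

section Stabilizer

variable {A α : Type*} [Group A] [MulAction A α]

theorem card_fixedPairs_eq_sum_card_stabilizer_s16 [Finite A] {ι : Type*} [Fintype ι] (f : ι → α) :
    Nat.card {q : ι × A // q.2 • f q.1 = f q.1} = ∑ i, Nat.card (stabilizer A (f i)) := by
  rw [Nat.card_congr (Equiv.subtypeProdEquivSigmaSubtype fun i (a : A) => a • f i = f i),
    Nat.card_sigma]
  rfl

/-- The left side is `|A|`, `1` or `p` according as the stabilizer is `⊤`, `⊥` (exclusive cases,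
as `A` is nontrivial) or neither; written this way it sums to a linear combination of counts. -/
theorem lowerBound_le_card_stabilizer [Finite A] [Nontrivial A] {p : ℕ}
    (hpmin : ∀ r : ℕ, r.Prime → r ∣ Nat.card A → p ≤ r) (x : α) :
    (p : ℚ) + (Nat.card A - p) * (if stabilizer A x = ⊤ then 1 else 0)
        + (1 - p) * (if stabilizer A x = ⊥ then 1 else 0)
      ≤ Nat.card (stabilizer A x) := by
  by_cases htop : stabilizer A x = ⊤
  · simp [htop]
  by_cases hbot : stabilizer A x = ⊥
  · simp [hbot]
  simpa [htop, hbot] using Subgroup.le_card_of_ne_bot hpmin hbot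

end Stabilizer

open Finset in
theorem card_autFix_eq [Group G] [Fintype G] (H : Subgroup G) :
    Nat.card (autFix H) = #{x : H | stabilizer (MulAut G) (x : G) = ⊤} := by
  rw [← Fintype.card_subtype, ← Nat.card_eq_fintype_card]
  exact Nat.card_congr
    { toFun := fun y => ⟨⟨y, y.2.1⟩, Subgroup.eq_top_iff' _ |>.mpr y.2.2⟩
      invFun := fun x => ⟨x.1, x.1.2, (Subgroup.eq_top_iff' _).mp x.2⟩
      left_inv := fun _ => rfl
      right_inv := fun _ => rfl }

open Finset in
theorem card_autX_eq [Group G] [Fintype G] (H : Subgroup G) :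
    Nat.card (autX H) = #{x : H | stabilizer (MulAut G) (x : G) = ⊥} := by
  rw [← Fintype.card_subtype, ← Nat.card_eq_fintype_card]
  congr! 3 with x
  simp [autX, Subgroup.eq_bot_iff_forall, mem_stabilizer_iff]

theorem stmt16_general [Group G] [Fintype G] (H : Subgroup G)
    (p : ℕ) (hp : p.Prime) (hpdvd : p ∣ Nat.card (MulAut G))
    (hpmin : ∀ r : ℕ, r.Prime → r ∣ Nat.card (MulAut G) → p ≤ r) :
    autPr H ≥
      (Nat.card (autFix H) : ℚ) / (Nat.card H : ℚ)
        + ((p : ℚ) * ((Nat.card H : ℚ) - (Nat.card (autX H) : ℚ)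
              - (Nat.card (autFix H) : ℚ)) + (Nat.card (autX H) : ℚ))
          / ((Nat.card H : ℚ) * (Nat.card (MulAut G) : ℚ)) := by
  have : Nontrivial (MulAut G) := Finite.one_lt_card_iff_nontrivial.mp <|
    hp.one_lt.trans_le (Nat.le_of_dvd Nat.card_pos hpdvd)
  have hcount := Finset.sum_le_sum (s := .univ) fun (x : H) _ =>
    lowerBound_le_card_stabilizer hpmin (x : G)
  simp only [Finset.sum_add_distrib, ← Finset.mul_sum, Finset.sum_const, Finset.card_univ,
    Finset.sum_boole, nsmul_eq_mul, ← card_autFix_eq, ← card_autX_eq] at hcount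
  rw [← Nat.cast_sum, ← card_fixedPairs_eq_sum_card_stabilizer_s16, ← Nat.card_eq_fintype_card]
    at hcount
  have hH : (Nat.card H : ℚ) ≠ 0 := mod_cast Nat.card_pos.ne'
  have hA : (Nat.card (MulAut G) : ℚ) ≠ 0 := mod_cast Nat.card_pos.ne'
  calc _ = ((Nat.card H : ℚ) * p + (Nat.card (MulAut G) - p) * Nat.card (autFix H)
          + (1 - p) * Nat.card (autX H)) / (Nat.card H * Nat.card (MulAut G)) := by
        field_simp
        ring
    _ ≤ autPr H := div_le_div_of_nonneg_right hcount (by positivity)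

theorem stmt16 [Group G] [Fintype G] [DecidableEq G] (H : Subgroup G)
    (p : ℕ) (hp : p.Prime) (hpdvd : p ∣ Nat.card (MulAut G))
    (hpmin : ∀ r : ℕ, r.Prime → r ∣ Nat.card (MulAut G) → p ≤ r) :
    autPr H ≥
      (Nat.card (autFix H) : ℚ) / (Nat.card H : ℚ)
        + ((p : ℚ) * ((Nat.card H : ℚ) - (Nat.card (autX H) : ℚ)
              - (Nat.card (autFix H) : ℚ)) + (Nat.card (autX H) : ℚ))
          / ((Nat.card H : ℚ) * (Nat.card (MulAut G) : ℚ)) :=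
  stmt16_general H p hp hpdvd hpmin
end

section
/- Let G₁ and G₂ be finite groups with subgroups H₁ and H₂ respectively, and write Lᵢ = L(Hᵢ, Aut(Gᵢ)). Suppose there exist group isomorphisms ψ : H₁/L₁ → H₂/L₂, γ : Aut(G₁) → Aut(G₂), and β : [H₁, Aut(G₁)] → [H₂, Aut(G₂)] such that for all x₁ ∈ H₁, α₁ ∈ Aut(G₁) and x₂ ∈ H₂ with ψ(x₁L₁) = x₂L₂, one has β(x₁⁻¹α₁(x₁)) = x₂⁻¹(γ(α₁))(x₂). Then Pr(H₁, Aut(G₁)) = Pr(H₂, Aut(G₂)). -/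
open scoped Classical

variable {G : Type*}

/-!
Whether an automorphism `α` fixes `x ∈ H` depends only on the coset `x L(H, Aut G)`, so the fixed
pairs in `H × Aut(G)` are `|L|` copies of the fixed pairs in `H/L × Aut(G)`, and `Pr(H, Aut(G))` can be
computed on `H/L × Aut(G)`. There `α` fixes `xL` iff the autocommutator `x⁻¹ α(x)` is trivial; the
compatibility hypothesis transports this through `β`, so `(ψ, γ)` is a bijection
`H₁/L₁ × Aut(G₁) ≃ H₂/L₂ × Aut(G₂)` matching the fixed pairs.
-/

section FixesCoset

variable [Group G] {H : Subgroup G}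

lemma fixes_iff_of_mk_eq {x y : H} (h : (x : H ⧸ (autFix H).subgroupOf H) = y)
    (α : MulAut G) : α x = x ↔ α y = y := by
  rw [QuotientGroup.eq, Subgroup.mem_subgroupOf] at h
  have hfix : α ((x : G)⁻¹ * y) = (x : G)⁻¹ * y := h.2 α
  have hy : α y = α x * ((x : G)⁻¹ * y) := by
    rw [← hfix, map_mul, map_inv, mul_inv_cancel_left]
  constructor
  · intro hx
    rw [hy, hx, mul_inv_cancel_left]
  · intro hy'
    rw [hy'] at hy
    exact mul_right_cancel (hy.symm.trans (mul_inv_cancel_left (x : G) y).symm)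

def FixesCoset (α : MulAut G) (c : H ⧸ (autFix H).subgroupOf H) : Prop :=
  Quotient.liftOn' c (fun x : H => α x = x)
    fun _ _ h => propext (fixes_iff_of_mk_eq (Quotient.sound' h) α)

lemma card_fixedPairs_eq_mul :
    Nat.card {p : H × MulAut G // p.2 p.1 = p.1} =
      Nat.card {q : (H ⧸ (autFix H).subgroupOf H) × MulAut G // FixesCoset q.2 q.1} *
        Nat.card ((autFix H).subgroupOf H) := by
  let e : H × MulAut G ≃ ((H ⧸ (autFix H).subgroupOf H) × MulAut G) × (autFix H).subgroupOf H :=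
    (Subgroup.groupEquivQuotientProdSubgroup.prodCongr (Equiv.refl _)).trans <|
      (Equiv.prodAssoc _ _ _).trans <|
        ((Equiv.refl _).prodCongr (Equiv.prodComm _ _)).trans (Equiv.prodAssoc _ _ _).symm
  let fixedPairsEquiv : {p : H × MulAut G // p.2 p.1 = p.1} ≃
      {r : ((H ⧸ (autFix H).subgroupOf H) × MulAut G) × (autFix H).subgroupOf H //
        FixesCoset r.1.2 r.1.1} :=
    e.subtypeEquiv fun _ => Iff.rfl
  rw [← Nat.card_prod, Nat.card_congr (fixedPairsEquiv.trans
    (Equiv.prodSubtypeFstEquivSubtypeProd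
      (p := fun q : (H ⧸ (autFix H).subgroupOf H) × MulAut G => FixesCoset q.2 q.1)))]

lemma autPr_eq_card_fixesCoset_div [Finite G] :
    autPr H =
      (Nat.card {q : (H ⧸ (autFix H).subgroupOf H) × MulAut G // FixesCoset q.2 q.1} : ℚ) /
        ((Nat.card (H ⧸ (autFix H).subgroupOf H) : ℚ) * (Nat.card (MulAut G) : ℚ)) := by
  have hL : (Nat.card ((autFix H).subgroupOf H) : ℚ) ≠ 0 := by
    exact_mod_cast Nat.card_pos.ne'
  rw [autPr, card_fixedPairs_eq_mul,
    Subgroup.card_eq_card_quotient_mul_card_subgroup ((autFix H).subgroupOf H)]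
  push_cast
  field_simp

end FixesCoset

lemma fixesCoset_iff_of_autcomm_compat {G₁ G₂ : Type*} [Group G₁] [Group G₂]
    {H₁ : Subgroup G₁} {H₂ : Subgroup G₂}
    (ψ : (H₁ ⧸ (autFix H₁).subgroupOf H₁) ≃* (H₂ ⧸ (autFix H₂).subgroupOf H₂))
    (γ : MulAut G₁ ≃* MulAut G₂)
    (β : Subgroup.closure (autS H₁) ≃* Subgroup.closure (autS H₂))
    (hcompat : ∀ (x₁ : H₁) (α₁ : MulAut G₁) (x₂ : H₂),
      ψ (QuotientGroup.mk x₁) = QuotientGroup.mk x₂ →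
      (β ⟨(x₁ : G₁)⁻¹ * α₁ x₁, autcomm_mem_closure H₁ x₁ α₁⟩ : G₂)
        = (x₂ : G₂)⁻¹ * (γ α₁) x₂)
    (α : MulAut G₁) (c : H₁ ⧸ (autFix H₁).subgroupOf H₁) :
    FixesCoset α c ↔ FixesCoset (γ α) (ψ c) := by
  induction c using QuotientGroup.induction_on with | H x₁ => ?_
  obtain ⟨x₂, hx₂⟩ := QuotientGroup.mk_surjective (ψ x₁)
  rw [← hx₂]
  calc α x₁ = x₁
      ↔ (⟨(x₁ : G₁)⁻¹ * α x₁, autcomm_mem_closure H₁ x₁ α⟩ : Subgroup.closure (autS H₁)) = 1 := by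
        rw [← Subtype.val_inj, Subgroup.coe_one, inv_mul_eq_one, eq_comm]
    _ ↔ β ⟨(x₁ : G₁)⁻¹ * α x₁, autcomm_mem_closure H₁ x₁ α⟩ = 1 := β.map_eq_one_iff.symm
    _ ↔ (x₂ : G₂)⁻¹ * γ α x₂ = 1 := by
        rw [← Subtype.val_inj, hcompat x₁ α x₂ hx₂.symm, Subgroup.coe_one]
    _ ↔ γ α x₂ = x₂ := inv_mul_eq_one.trans eq_comm

theorem stmt19_general {G₁ G₂ : Type*} [Group G₁] [Fintype G₁]
    [Group G₂] [Fintype G₂]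
    (H₁ : Subgroup G₁) (H₂ : Subgroup G₂)
    (ψ : (H₁ ⧸ (autFix H₁).subgroupOf H₁) ≃* (H₂ ⧸ (autFix H₂).subgroupOf H₂))
    (γ : MulAut G₁ ≃* MulAut G₂)
    (β : Subgroup.closure (autS H₁) ≃* Subgroup.closure (autS H₂))
    (hcompat : ∀ (x₁ : H₁) (α₁ : MulAut G₁) (x₂ : H₂),
      ψ (QuotientGroup.mk x₁) = QuotientGroup.mk x₂ →
      (β ⟨(x₁ : G₁)⁻¹ * α₁ x₁, autcomm_mem_closure H₁ x₁ α₁⟩ : G₂)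
        = (x₂ : G₂)⁻¹ * (γ α₁) x₂) :
    autPr H₁ = autPr H₂ := by
  have hfix := fixesCoset_iff_of_autcomm_compat ψ γ β hcompat
  rw [autPr_eq_card_fixesCoset_div, autPr_eq_card_fixesCoset_div,
    Nat.card_congr ((Equiv.prodCongr ψ.toEquiv γ.toEquiv).subtypeEquiv
      (q := fun q => FixesCoset q.2 q.1) fun q => hfix q.2 q.1),
    Nat.card_congr ψ.toEquiv, Nat.card_congr γ.toEquiv]

theorem stmt19 {G₁ G₂ : Type*} [Group G₁] [Fintype G₁] [DecidableEq G₁]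
    [Group G₂] [Fintype G₂] [DecidableEq G₂]
    (H₁ : Subgroup G₁) (H₂ : Subgroup G₂)
    (ψ : (H₁ ⧸ (autFix H₁).subgroupOf H₁) ≃* (H₂ ⧸ (autFix H₂).subgroupOf H₂))
    (γ : MulAut G₁ ≃* MulAut G₂)
    (β : Subgroup.closure (autS H₁) ≃* Subgroup.closure (autS H₂))
    (hcompat : ∀ (x₁ : H₁) (α₁ : MulAut G₁) (x₂ : H₂),
      ψ (QuotientGroup.mk x₁) = QuotientGroup.mk x₂ →
      (β ⟨(x₁ : G₁)⁻¹ * α₁ x₁, autcomm_mem_closure H₁ x₁ α₁⟩ : G₂)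
        = (x₂ : G₂)⁻¹ * (γ α₁) x₂) :
    autPr H₁ = autPr H₂ :=
  stmt19_general H₁ H₂ ψ γ β hcompat
end
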